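/- arXiv:math/9803053 — 5 statements merged into one kernel-verified Lean document; each statement's English description precedes it below -/
import Mathlib

section
/- In the setting of Proposition 1.1 (semi-simple Frobenius manifolds), flatness of the connection D = d + Ψ⁻¹dΨ∧ together with the equations DR⁽⁰⁾ = [dU, R⁽¹⁾] and Ψ⁻¹dΨ = [dU, R⁽⁰⁾] implies that the one-form Σᵢ R⁽⁰⁾ᵢᵢ duᵢ is closed, where R⁽⁰⁾ is symmetric and dR⁽⁰⁾ᵢᵢ = Σₗ R⁽⁰⁾ᵢₗ(duₗ - duᵢ)R⁽⁰⁾ₗᵢ. -/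
/- Closedness of Σᵢ R⁽⁰⁾ᵢᵢ duᵢ in canonical coordinates: if R is symmetric,
∂ₗRᵢⱼ = RᵢₗRₗⱼ for l ∉ {i,j}, and Σₗ ∂ₗRᵢⱼ = 0, then
dRᵢᵢ = Σₗ RᵢₗRₗᵢ(duₗ - duᵢ) and the 1-form Σᵢ Rᵢᵢ duᵢ is closed
(∂ⱼRᵢᵢ = ∂ᵢRⱼⱼ). -/
theorem stmt9 (N : ℕ) (R : (Fin N → ℂ) → Matrix (Fin N) (Fin N) ℂ)
    (hdiff : ∀ i j, Differentiable ℂ fun u => R u i j)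
    (hsym : ∀ u i j, R u i j = R u j i)
    (hoff : ∀ (u : Fin N → ℂ) i j l, l ≠ i → l ≠ j →
      fderiv ℂ (fun u => R u i j) u (Pi.single l 1) = R u i l * R u l j)
    (hsum : ∀ (u : Fin N → ℂ) i j,
      ∑ l, fderiv ℂ (fun u => R u i j) u (Pi.single l 1) = 0) :
    (∀ (u : Fin N → ℂ) (i : Fin N) (v : Fin N → ℂ),
      fderiv ℂ (fun u => R u i i) u v
        = ∑ l, R u i l * R u l i * (v l - v i)) ∧
    (∀ (u : Fin N → ℂ) (i j : Fin N),
      fderiv ℂ (fun u => R u i i) u (Pi.single j 1)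
        = fderiv ℂ (fun u => R u j j) u (Pi.single i 1)) := by
  -- the diagonal derivative in direction i
  have hdiag : ∀ (u : Fin N → ℂ) (i : Fin N),
      fderiv ℂ (fun u => R u i i) u (Pi.single i 1)
        = -∑ l ∈ Finset.univ.erase i, R u i l * R u l i := by
    intro u i
    have h := hsum u i i
    rw [← Finset.add_sum_erase _ _ (Finset.mem_univ i)] at h
    have h2 : ∑ l ∈ Finset.univ.erase i,
        fderiv ℂ (fun u => R u i i) u (Pi.single l 1)
        = ∑ l ∈ Finset.univ.erase i, R u i l * R u l i := by
      refine Finset.sum_congr rfl fun l hl => ?_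
      exact hoff u i i l (Finset.ne_of_mem_erase hl) (Finset.ne_of_mem_erase hl)
    rw [h2] at h
    exact eq_neg_of_add_eq_zero_left h
  have part1 : ∀ (u : Fin N → ℂ) (i : Fin N) (v : Fin N → ℂ),
      fderiv ℂ (fun u => R u i i) u v
        = ∑ l, R u i l * R u l i * (v l - v i) := by
    intro u i v
    have hv : v = ∑ l, v l • (Pi.single l 1 : Fin N → ℂ) := by
      funext k
      simp [Finset.sum_apply, Pi.single_apply, Finset.sum_ite_eq']
    calc fderiv ℂ (fun u => R u i i) u v
        = ∑ l, v l * fderiv ℂ (fun u => R u i i) u (Pi.single l 1) := by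
          conv_lhs => rw [hv]
          rw [map_sum]
          exact Finset.sum_congr rfl fun l _ => by rw [map_smul]; rfl
      _ = ∑ l ∈ Finset.univ.erase i, v l * (R u i l * R u l i)
            + v i * (-∑ l ∈ Finset.univ.erase i, R u i l * R u l i) := by
          rw [← Finset.add_sum_erase _ _ (Finset.mem_univ i), hdiag, add_comm]
          congr 1
          refine Finset.sum_congr rfl fun l hl => ?_
          rw [hoff u i i l (Finset.ne_of_mem_erase hl) (Finset.ne_of_mem_erase hl)]
      _ = ∑ l ∈ Finset.univ.erase i, R u i l * R u l i * (v l - v i) := by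
          rw [mul_neg, Finset.mul_sum, ← sub_eq_add_neg, ← Finset.sum_sub_distrib]
          exact Finset.sum_congr rfl fun l _ => by ring
      _ = ∑ l, R u i l * R u l i * (v l - v i) := by
          rw [← Finset.add_sum_erase _ _ (Finset.mem_univ i)]
          simp
  refine ⟨part1, fun u i j => ?_⟩
  by_cases hij : i = j
  · subst hij; rfl
  · rw [hoff u i i j (Ne.symm hij) (Ne.symm hij), hoff u j j i hij hij,
      hsym u i j, mul_comm]
end

section
/- For the matrix Riccati-type system in canonical coordinates, ∂ₗRᵢⱼ = RᵢₗRₗⱼ (l ≠ i,j) together with Σₗ∂ₗRᵢⱼ = 0 and symmetry Rᵢⱼ = Rⱼᵢ implies that the hamiltonians Hᵢ = (1/2)Σ_{j≠i} VᵢⱼVⱼᵢ/(uᵢ-uⱼ), with Vᵢⱼ = Rᵢⱼ(uᵢ-uⱼ), pairwise Poisson-commute on so_N* with respect to the standard Lie–Poisson bracket {Vᵢⱼ, Vₖₗ} = δⱼₖVᵢₗ - δᵢₗVₖⱼ + δⱼₗVₖᵢ - δᵢₖVⱼₗ, for fixed pairwise distinct u₁,…,u_N. -/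
/-!
On antisymmetric `V`, the differential of `Hᵢ` is the antisymmetric matrix
`eᵢ gᵢᵀ - gᵢ eᵢᵀ` with `gᵢ(j) = Vⱼᵢ / (2(uᵢ - uⱼ))`. For antisymmetric differentials
`A`, `B` the so_N bracket is `4 Σ A_ab B_bc V_ac`; for `i ≠ k` this collapses to one sum
over `x` whose terms vanish by the partial fraction identity
`1/((uᵢ-uₖ)(uₖ-uₓ)) - 1/((uᵢ-uₓ)(uₖ-uₓ)) - 1/((uᵢ-uₖ)(uᵢ-uₓ)) = 0`.
The case `i = k` is the antisymmetry of the bracket.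
-/

/-- The Lie–Poisson bracket on functions of an antisymmetric matrix V ∈ so_N*
(matrices realized as Fin N → Fin N → ℂ), defined by bilinear extension of
{Vᵢⱼ, Vₖₗ} = δⱼₖVᵢₗ - δᵢₗVₖⱼ + δⱼₗVₖᵢ - δᵢₖVⱼₗ. -/
noncomputable def liePoisson {N : ℕ}
    (f g : (Fin N → Fin N → ℂ) → ℂ) (V : Fin N → Fin N → ℂ) : ℂ :=
  ∑ i, ∑ j, ∑ k, ∑ l,
    fderiv ℂ f V (Pi.single i (Pi.single j 1)) *
    fderiv ℂ g V (Pi.single k (Pi.single l 1)) *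
    ((if j = k then V i l else 0) - (if i = l then V k j else 0)
      + (if j = l then V k i else 0) - (if i = k then V j l else 0))

/-- The hamiltonians Hᵢ(V) = (1/2)Σ_{j≠i} VᵢⱼVⱼᵢ/(uᵢ-uⱼ). -/
noncomputable def dubrovinHam {N : ℕ} (u : Fin N → ℂ) (i : Fin N)
    (V : Fin N → Fin N → ℂ) : ℂ :=
  (1 / 2) * ∑ j ∈ Finset.univ.erase i, V i j * V j i / (u i - u j)

theorem Fintype.sum_sum_sum_sum_comm {ι M : Type*} [Fintype ι] [AddCommMonoid M]
    (F : ι → ι → ι → ι → M) :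
    ∑ i, ∑ j, ∑ k, ∑ l, F i j k l = ∑ k, ∑ l, ∑ i, ∑ j, F i j k l := by
  simp only [← Fintype.sum_prod_type']
  exact Fintype.sum_equiv ⟨fun x => (x.2.2.1, x.2.2.2, x.1, x.2.1),
    fun x => (x.2.2.1, x.2.2.2, x.1, x.2.1), fun _ => rfl, fun _ => rfl⟩ _ _ fun _ => rfl

section LiePoisson

variable {N : ℕ} {V : Fin N → Fin N → ℂ}

theorem liePoisson_swap (hV : ∀ a b, V b a = -V a b) (f g : (Fin N → Fin N → ℂ) → ℂ) :
    liePoisson g f V = -liePoisson f g V := by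
  unfold liePoisson
  conv_lhs => rw [Fintype.sum_sum_sum_sum_comm]
  rw [← Finset.sum_neg_distrib]
  refine Finset.sum_congr rfl fun k _ => ?_
  rw [← Finset.sum_neg_distrib]
  refine Finset.sum_congr rfl fun l _ => ?_
  rw [← Finset.sum_neg_distrib]
  refine Finset.sum_congr rfl fun i _ => ?_
  rw [← Finset.sum_neg_distrib]
  refine Finset.sum_congr rfl fun j _ => ?_
  simp only [@eq_comm _ j k, @eq_comm _ i l, @eq_comm _ j l, @eq_comm _ i k]
  rw [hV i k, hV l j]
  split_ifs <;> ring

theorem liePoisson_self (hV : ∀ a b, V b a = -V a b) (f : (Fin N → Fin N → ℂ) → ℂ) :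
    liePoisson f f V = 0 :=
  CharZero.eq_neg_self_iff.mp (liePoisson_swap hV f f)

theorem liePoisson_eq_four_mul_sum {f g : (Fin N → Fin N → ℂ) → ℂ} {A B : Fin N → Fin N → ℂ}
    (hf : ∀ a b, fderiv ℂ f V (Pi.single a (Pi.single b 1)) = A a b)
    (hg : ∀ a b, fderiv ℂ g V (Pi.single a (Pi.single b 1)) = B a b)
    (hA : ∀ a b, A b a = -A a b) (hB : ∀ a b, B b a = -B a b) (hV : ∀ a b, V b a = -V a b) :
    liePoisson f g V = 4 * ∑ a, ∑ b, ∑ c, A a b * B b c * V a c := by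
  set S := ∑ a, ∑ b, ∑ c, A a b * B b c * V a c
  have h₂ : ∑ a, ∑ b, ∑ c, A a b * B c a * V c b = -S := by
    rw [Finset.sum_comm]
    simp only [S, ← Finset.sum_neg_distrib]
    refine Finset.sum_congr rfl fun b _ => Finset.sum_congr rfl fun a _ =>
      Finset.sum_congr rfl fun c _ => ?_
    rw [hA b a, hB a c, hV b c]
    ring
  have h₃ : ∑ a, ∑ b, ∑ c, A a b * B c b * V c a = S :=
    Finset.sum_congr rfl fun a _ => Finset.sum_congr rfl fun b _ =>
      Finset.sum_congr rfl fun c _ => by rw [hB b c, hV a c]; ring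
  have h₄ : ∑ a, ∑ b, ∑ c, A a b * B a c * V b c = -S := by
    rw [Finset.sum_comm]
    simp only [S, ← Finset.sum_neg_distrib]
    refine Finset.sum_congr rfl fun b _ => Finset.sum_congr rfl fun a _ =>
      Finset.sum_congr rfl fun c _ => ?_
    rw [hA b a]
    ring
  simp only [liePoisson, hf, hg, mul_sub, mul_add, mul_ite, mul_zero, Finset.sum_add_distrib,
    Finset.sum_sub_distrib, Finset.sum_ite_irrel, Finset.sum_const_zero, Finset.sum_ite_eq,
    Finset.mem_univ, if_true, h₂, h₃, h₄]
  ring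

end LiePoisson

section Wedge

variable {ι R : Type*} [DecidableEq ι] [CommRing R]

def wedgeSingle (i : ι) (g : ι → R) (a b : ι) : R :=
  (if a = i then g b else 0) - (if b = i then g a else 0)

theorem wedgeSingle_swap (i : ι) (g : ι → R) (a b : ι) :
    wedgeSingle i g b a = -wedgeSingle i g a b := by
  simp only [wedgeSingle, neg_sub]

theorem sum_wedgeSingle_mul_wedgeSingle_mul [Fintype ι] {i k : ι} (hik : i ≠ k) (g h : ι → R)
    (V : ι → ι → R) :
    ∑ a, ∑ b, ∑ c, wedgeSingle i g a b * wedgeSingle k h b c * V a c =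
      ∑ x, (g k * h x * V i x - g x * h x * V i k + g x * h i * V x k) := by
  simp only [wedgeSingle, mul_sub, mul_ite, sub_mul, ite_mul, zero_mul, mul_zero,
    Finset.sum_sub_distrib, Finset.sum_add_distrib, Finset.sum_ite_irrel, Finset.sum_const_zero,
    Finset.sum_ite_eq', Finset.mem_univ, if_true, hik.symm, if_false, sub_zero]
  ring

end Wedge

section Hamiltonian

variable {N : ℕ} (u : Fin N → ℂ) (V : Fin N → Fin N → ℂ)

/-- At `j = i` this is `0`, because division by `u i - u i = 0` returns `0`. -/
noncomputable def hamGrad (i j : Fin N) : ℂ := V j i / (2 * (u i - u j))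

theorem dubrovinHam_eq_sum (i : Fin N) :
    dubrovinHam u i = fun V => ∑ j, V i j * V j i / (2 * (u i - u j)) := by
  funext V
  rw [dubrovinHam, Finset.sum_erase _ (by simp), Finset.mul_sum]
  refine Finset.sum_congr rfl fun j _ => ?_
  field_simp

theorem fderiv_dubrovinHam_apply (i : Fin N) (W : Fin N → Fin N → ℂ) :
    fderiv ℂ (dubrovinHam u i) V W =
      ∑ j, (W i j * V j i + V i j * W j i) / (2 * (u i - u j)) := by
  have hcoord (a b : Fin N) := hasFDerivAt_pi'.1 (hasFDerivAt_apply (𝕜 := ℂ) a V) b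
  have hH : HasFDerivAt
      (fun X : Fin N → Fin N → ℂ => ∑ j, X i j * X j i / (2 * (u i - u j))) _ V :=
    HasFDerivAt.fun_sum fun j _ =>
      ((hcoord i j).fun_mul (hcoord j i)).mul_const (2 * (u i - u j))⁻¹
  rw [dubrovinHam_eq_sum, hH.fderiv]
  simp only [sum_apply, smul_apply, add_apply, ContinuousLinearMap.comp_apply,
    ContinuousLinearMap.proj_apply, smul_eq_mul, div_eq_mul_inv]
  exact Finset.sum_congr rfl fun _ _ => by ring

theorem fderiv_dubrovinHam_single (hV : ∀ a b, V b a = -V a b) (i a b : Fin N) :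
    fderiv ℂ (dubrovinHam u i) V (Pi.single a (Pi.single b 1)) =
      wedgeSingle i (hamGrad u V i) a b := by
  rw [fderiv_dubrovinHam_apply, wedgeSingle]
  simp only [Pi.single_apply, ite_apply, Pi.zero_apply, mul_ite, ite_mul, mul_one, one_mul,
    mul_zero, zero_mul, add_div, ite_div, zero_div, Finset.sum_add_distrib, Finset.sum_ite_irrel,
    Finset.sum_ite_eq', Finset.mem_univ, if_true, Finset.sum_const_zero, hamGrad, @eq_comm _ i]
  rw [hV a i]
  split_ifs <;> ring

theorem hamGrad_cross_sum_eq_zero (hu : Function.Injective u) (hV : ∀ a b, V b a = -V a b)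
    {i k : Fin N} (hik : i ≠ k) (x : Fin N) :
    hamGrad u V i k * hamGrad u V k x * V i x - hamGrad u V i x * hamGrad u V k x * V i k
      + hamGrad u V i x * hamGrad u V k i * V x k = 0 := by
  have hdiag (a : Fin N) : V a a = 0 := CharZero.eq_neg_self_iff.mp (hV a a)
  by_cases hxi : x = i
  · simp [hxi, hamGrad, hdiag]
  by_cases hxk : x = k
  · simp [hxk, hamGrad, hdiag]
  have hne {a b : Fin N} (h : a ≠ b) : u a - u b ≠ 0 := sub_ne_zero.mpr (hu.ne h)
  have hik' := hne hik
  have hki := hne hik.symm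
  have hix := hne (Ne.symm hxi)
  have hkx := hne (Ne.symm hxk)
  simp only [hamGrad]
  rw [hV i k, hV i x]
  field_simp
  ring

end Hamiltonian

theorem stmt10_general (N : ℕ) (u : Fin N → ℂ) (hu : Function.Injective u)
    (i k : Fin N) (V : Fin N → Fin N → ℂ) (hV : ∀ a b, V b a = -V a b) :
    liePoisson (dubrovinHam u i) (dubrovinHam u k) V = 0 := by
  rcases eq_or_ne i k with rfl | hik
  · exact liePoisson_self hV _
  rw [liePoisson_eq_four_mul_sum (fderiv_dubrovinHam_single u V hV i)
    (fderiv_dubrovinHam_single u V hV k) (wedgeSingle_swap _ _) (wedgeSingle_swap _ _) hV, sum_wedgeSingle_mul_wedgeSingle_mul hik,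
    Finset.sum_eq_zero fun x _ => hamGrad_cross_sum_eq_zero u V hu hV hik x, mul_zero]

theorem stmt10 (N : ℕ) (hN : 2 ≤ N) (u : Fin N → ℂ) (hu : Function.Injective u)
    (i k : Fin N) (V : Fin N → Fin N → ℂ) (hV : ∀ a b, V b a = -V a b) :
    liePoisson (dubrovinHam u i) (dubrovinHam u k) V = 0 :=
  stmt10_general N u hu i k V hV
end

section
/- Multiple cover contribution to genus 0 invariants: for E = total space of O(-1)⊕O(-1) over ℂP¹ with equivariant quantum relation p² = λ²/(1-q) (where p restricts to ±λ at the fixed points), the differentials of canonical coordinates are du_± = dt₀ ± λ(1-q)^{-1/2} d log q, and the intersection pairing ⟨1,1⟩ = ⟨p,p⟩ = 0, ⟨1,p⟩ = λ⁻² determines the Hessians Δ_± = ±2λ³(1-q)^{-1/2}; hence d log(Δ₊Δ₋) = q(1-q)⁻¹ d log q. -/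
/- The Hessians solve a 2×2 linear system in 1/Δ₊, 1/Δ₋ whose unique solution is
Δ_± = ±2p/c with c = ⟨1,p⟩ = λ⁻²; then Δ₊Δ₋ = -4λ⁶/(1-q), whose logarithmic derivative
is 1/(1-q). -/

theorem pairing_system_iff {K : Type*} [Field K] [CharZero K] {p c Dp Dm : K}
    (hp : p ≠ 0) (hc : c ≠ 0) (hDp : Dp ≠ 0) (hDm : Dm ≠ 0) :
    (1 / Dp + 1 / Dm = 0 ∧ p / Dp + -p / Dm = c) ↔ Dp = 2 * p / c ∧ Dm = -(2 * p / c) := by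
  constructor
  · rintro ⟨h₁, h₂⟩
    have hDm_eq : Dm = -Dp := by
      field_simp at h₁
      linear_combination h₁
    subst hDm_eq
    have hDp_eq : Dp = 2 * p / c := by
      field_simp at h₂ ⊢
      linear_combination -h₂
    exact ⟨hDp_eq, by rw [hDp_eq]⟩
  · rintro ⟨rfl, rfl⟩
    constructor <;> field_simp <;> ring

theorem div_sqrt_mul_div_sqrt (a b : ℝ) {y : ℝ} (hy : 0 ≤ y) :
    a / √y * (b / √y) = a * b / y := by
  rw [div_mul_div_comm, Real.mul_self_sqrt hy]

theorem deriv_const_div_one_sub (a : ℝ) {q : ℝ} (hq : 1 - q ≠ 0) :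
    deriv (fun s => a / (1 - s)) q = a / (1 - q) ^ 2 := by
  rw [deriv_const_div a (by fun_prop) hq, deriv_const_sub, deriv_id'']
  ring

theorem stmt13 (l : ℝ) (hl : l ≠ 0) (pp pm Δp Δm : ℝ → ℝ)
    (hpp : ∀ q, pp q = l / Real.sqrt (1 - q)) (hpm : ∀ q, pm q = -(l / Real.sqrt (1 - q)))
    (hΔp : ∀ q, Δp q = 2 * l ^ 3 / Real.sqrt (1 - q))
    (hΔm : ∀ q, Δm q = -(2 * l ^ 3 / Real.sqrt (1 - q)))
    (q : ℝ) (hq : 0 < 1 - q) :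
    (1 / Δp q + 1 / Δm q = 0 ∧ pp q / Δp q + pm q / Δm q = 1 / l ^ 2) ∧
    (∀ Dp Dm : ℝ, Dp ≠ 0 → Dm ≠ 0 →
      1 / Dp + 1 / Dm = 0 → pp q / Dp + pm q / Dm = 1 / l ^ 2 →
      Dp = Δp q ∧ Dm = Δm q) ∧
    q * deriv (fun s => Δp s * Δm s) q / (Δp q * Δm q) = q / (1 - q) := by
  have hs : 0 < √(1 - q) := Real.sqrt_pos.mpr hq
  have hp : l / √(1 - q) ≠ 0 := div_ne_zero hl hs.ne'
  have hc : 1 / l ^ 2 ≠ 0 := by positivity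
  have hΔ : 2 * (l / √(1 - q)) / (1 / l ^ 2) = 2 * l ^ 3 / √(1 - q) := by
    field_simp
  have hΔp_ne : Δp q ≠ 0 := by rw [hΔp]; positivity
  have hΔm_ne : Δm q ≠ 0 := by rw [hΔm, neg_ne_zero, ← hΔp]; exact hΔp_ne
  have hsolve : ∀ Dp Dm : ℝ, Dp ≠ 0 → Dm ≠ 0 →
      ((1 / Dp + 1 / Dm = 0 ∧ l / √(1 - q) / Dp + -(l / √(1 - q)) / Dm = 1 / l ^ 2) ↔
        Dp = 2 * l ^ 3 / √(1 - q) ∧ Dm = -(2 * l ^ 3 / √(1 - q))) := by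
    intro Dp Dm hDp hDm
    rw [← hΔ]
    exact pairing_system_iff hp hc hDp hDm
  have hprod : (fun s => Δp s * Δm s) =ᶠ[nhds q] fun s => -(4 * l ^ 6) / (1 - s) := by
    filter_upwards [isOpen_lt continuous_const (continuous_sub_left 1) |>.mem_nhds hq]
      with s hs_lt
    rw [hΔp, hΔm, mul_neg, div_sqrt_mul_div_sqrt _ _ hs_lt.le]
    ring
  refine ⟨?_, fun Dp Dm hDp hDm h₁ h₂ => ?_, ?_⟩
  · rw [hpp, hpm]
    exact (hsolve _ _ hΔp_ne hΔm_ne).mpr ⟨hΔp q, hΔm q⟩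
  · rw [hpp, hpm] at h₂
    rw [hΔp, hΔm]
    exact (hsolve Dp Dm hDp hDm).mp ⟨h₁, h₂⟩
  · rw [hprod.deriv_eq, deriv_const_div_one_sub _ hq.ne', hprod.eq_of_nhds]
    field_simp
end

section
/- The elliptic multiple-cover formula for O(-1)⊕O(-1) over ℂP¹: combining (1/2)[(R₊₊ - c₋₁⁺/12)du₊ + (R₋₋ - c₋₁⁻/12)du₋] = (1/2)(1/8 + 1/(8(1-q))) d log q with (1/48) d log(Δ₊Δ₋) = (1/48)·q(1-q)⁻¹ d log q gives dG = (1/8 + q/(12(1-q))) d log q; in particular the q-dependent part is d log(1-q)^{-1/12}, giving the contribution -(1/12)log(1-Q^D) of degree D rational curves and their multiple covers to the genus 1 GW potential of а Calabi–Yau 3-fold. -/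
/- The two sheets contribute equally, since `R₋₋ - 1/(8λ) = -(R₊₊ + 1/(8λ))` and `du₋ = -du₊`;
each contributes `1/16 + 1/(16(1-q))`, and `1/(1-q) = 1 + q/(1-q)` collects the `q`-dependence
into `q/(12(1-q))`, the logarithmic derivative of `(1-q)^(-1/12)`. -/

lemma shifted_propagator_mul {l s : ℝ} (hl : l ≠ 0) (hs : s ≠ 0) :
    (s / (16 * l) + 1 / (16 * l * s) - 1 / (8 * l) + 1 / (8 * l)) * (l / s)
      = 1 / 16 + 1 / (16 * s ^ 2) := by
  field_simp
  ring

lemma hasDerivAt_const_mul_log_one_sub {q : ℝ} (hq : 1 - q ≠ 0) (c : ℝ) :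
    HasDerivAt (fun s => c * Real.log (1 - s)) (-c / (1 - q)) q :=
  ((((hasDerivAt_id q).const_sub 1).log hq).const_mul c).congr_deriv (by simp only [id]; ring)

theorem stmt15 (l : ℝ) (hl : l ≠ 0) (q : ℝ) (hq : 0 < 1 - q)
    (Rpp Rmm : ℝ)
    (hRpp : Rpp = Real.sqrt (1 - q) / (16 * l)
      + 1 / (16 * l * Real.sqrt (1 - q)) - 1 / (8 * l))
    (hRmm : Rmm = -Rpp) :
    (1 / 2) * ((Rpp + 1 / (8 * l)) * (l / Real.sqrt (1 - q))
        + (Rmm - 1 / (8 * l)) * (-(l / Real.sqrt (1 - q))))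
      + (1 / 48) * (q / (1 - q))
      = 1 / 8 + q / (12 * (1 - q)) ∧
    q * deriv (fun s => -(1 / 12) * Real.log (1 - s)) q = q / (12 * (1 - q)) := by
  have sheet : (Rpp + 1 / (8 * l)) * (l / Real.sqrt (1 - q)) = 1 / 16 + 1 / (16 * (1 - q)) := by
    rw [hRpp, shifted_propagator_mul hl (Real.sqrt_pos.mpr hq).ne', Real.sq_sqrt hq.le]
  constructor
  · have sheets_agree : (Rmm - 1 / (8 * l)) * (-(l / Real.sqrt (1 - q)))
        = (Rpp + 1 / (8 * l)) * (l / Real.sqrt (1 - q)) := by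
      rw [hRmm]; ring
    rw [sheets_agree, sheet]
    field_simp
    ring
  · rw [(hasDerivAt_const_mul_log_one_sub hq.ne' _).deriv]
    field_simp
end

section
/- Quantum products of divisor classes from the J-function asymptotics (abstract form of Corollary 4.4): suppose S(q,ℏ) is a matrix solution of ℏ∂S = (p∘)S for each divisor direction p (∂ = q∂/∂q in the direction of p), and the row-sum vector of S has asymptotics (1 + O(ℏ^{-l}))e^{(p log q)/ℏ} with l > 1. Then for every k < l-1 and every degree-2 class p, the quantum power satisfies p^{∘(k+1)} = p^{k+1} (quantum and classical powers coincide), by induction on k using that the row sums of (ℏ∂)ᵏS determine ⟨pᵏ∘p, φ_β⟩ modulo ℏ⁻¹. -/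
open Matrix

/- Abstract form of Corollary 4.4: over a coefficient ring F (e.g. ℚ(λ)[[q]])
with derivation D (= q d/dq), let Mp be the matrix of quantum multiplication
by a degree-2 class p and Pc the (D-constant) matrix of classical
multiplication by p, written in the fixed-point basis with (D-constant,
invertible) diagonal metric g.  Suppose a matrix solution S of ℏDS = Mp·S has
the form S = J·e^{(p log q)/ℏ}, i.e. the ℏ⁻¹-series J with coefficients J k
satisfies D(J 0) = 0 and D(J (k+1)) + (J k)·Pc = Mp·(J k), with J 0 = 1, and
the row sums of J (paired with the unit 1 = Σ φ_α via g) are 1 + O(ℏ^{-l}),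
i.e. vanish in orders 1,…,l-1.  Then for every k < l-1 the quantum power of p
applied to the unit equals the classical one: p^{∘(k+1)} = p^{k+1}. -/
theorem stmt19 {F : Type*} [CommRing F] [Algebra ℚ F]
    (D : Derivation ℚ F F) (N l : ℕ) (hl : 1 < l)
    (Mp Pc : Matrix (Fin N) (Fin N) F)
    (g : Fin N → F) (hg : ∀ β, IsUnit (g β)) (hgc : ∀ β, D (g β) = 0)
    (hPcConst : ∀ i j, D (Pc i j) = 0)
    -- self-adjointness of the multiplication operators w.r.t. the metric g
    (hMpSA : ∀ i j, g i * Mp i j = Mp j i * g j)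
    (hPcSA : ∀ i j, g i * Pc i j = Pc j i * g j)
    (J : ℕ → Matrix (Fin N) (Fin N) F)
    (hJ0 : J 0 = 1)
    -- J = 1 + O(ℏ^{-l}) at the level of g-weighted row sums
    (hJrs : ∀ k, 1 ≤ k → k < l → ∀ β, ∑ γ, g γ * J k γ β = 0)
    -- ℏ D S = Mp S for S = J e^{(p log q)/ℏ}, equating powers of ℏ
    (hODE0 : ∀ i j, D (J 0 i j) = 0)
    (hODE : ∀ k, (Matrix.of fun i j => D (J (k + 1) i j)) + J k * Pc = Mp * J k)
    (one : Fin N → F) (hone : one = fun _ => 1) :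
    ∀ k : ℕ, k < l - 1 →
      (Mp ^ (k + 1)).mulVec one = (Pc ^ (k + 1)).mulVec one := by
  intro k hk
  -- self-adjoint swap lemma
  have hsa : ∀ (M : Matrix (Fin N) (Fin N) F), (∀ i j, g i * M i j = M j i * g j) →
      ∀ (v : Fin N → F) (β : Fin N),
        ∑ γ, (g γ * v γ) * M γ β = g β * ∑ γ, M β γ * v γ := by
    intro M hM v β
    rw [Finset.mul_sum]
    refine Finset.sum_congr rfl fun γ _ => ?_
    calc (g γ * v γ) * M γ β = v γ * (g γ * M γ β) := by ring
      _ = v γ * (M β γ * g β) := by rw [hM γ β]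
      _ = g β * (M β γ * v γ) := by ring
  have hPcpow : ∀ m i j, D ((Pc ^ m) i j) = 0 := by
    intro m
    induction m with
    | zero =>
      intro i j
      rw [pow_zero]
      by_cases h : i = j <;> simp [Matrix.one_apply, h]
    | succ m ih =>
      intro i j
      rw [pow_succ, Matrix.mul_apply, map_sum]
      refine Finset.sum_eq_zero fun δ _ => ?_
      rw [Derivation.leibniz, ih, hPcConst]
      simp
  have hPce : ∀ m γ, D ((Pc ^ m).mulVec one γ) = 0 := by
    intro m γ
    simp only [Matrix.mulVec, dotProduct, hone]
    rw [map_sum]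
    refine Finset.sum_eq_zero fun δ _ => ?_
    rw [mul_one]; exact hPcpow m γ δ
  suffices H : ∀ m, m < l →
      ((Mp ^ m).mulVec one = (Pc ^ m).mulVec one ∧
       ∀ k', 1 ≤ k' → k' + m < l → ∀ β,
         ∑ γ, (g γ * (Pc ^ m).mulVec one γ) * J k' γ β = 0) by
    exact (H (k + 1) (by omega)).1
  intro m
  induction m with
  | zero =>
    intro _
    constructor
    · rfl
    · intro k' hk1 hkl β
      have h := hJrs k' hk1 (by omega) β
      simpa [Matrix.one_mulVec, hone] using h
  | succ m ih =>
    intro hml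
    obtain ⟨IA, IB⟩ := ih (by omega)
    have hMv : ∀ δ, ∑ γ, Mp δ γ * (Pc ^ m).mulVec one γ = (Mp ^ (m + 1)).mulVec one δ := by
      intro δ
      have h1 : (Mp ^ (m + 1)).mulVec one = Mp.mulVec ((Mp ^ m).mulVec one) := by
        rw [Matrix.mulVec_mulVec, ← pow_succ']
      rw [h1, IA]
      simp [Matrix.mulVec, dotProduct]
    have hDw : ∀ γ, D (g γ * (Pc ^ m).mulVec one γ) = 0 := by
      intro γ
      rw [Derivation.leibniz, hgc, hPce]
      simp
    -- key recursion from the ODE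
    have R : ∀ k', k' + 1 + m < l → ∀ β,
        ∑ δ, (∑ γ, (g γ * (Pc ^ m).mulVec one γ) * J k' γ δ) * Pc δ β
          = ∑ δ, (g δ * (Mp ^ (m + 1)).mulVec one δ) * J k' δ β := by
      intro k' hk' β
      have hE := congrArg
        (fun M : Matrix (Fin N) (Fin N) F =>
          ∑ γ, (g γ * (Pc ^ m).mulVec one γ) * M γ β) (hODE k')
      simp only [Matrix.add_apply, Matrix.of_apply, Matrix.mul_apply, mul_add] at hE
      rw [Finset.sum_add_distrib] at hE
      have hT1 : ∑ γ, (g γ * (Pc ^ m).mulVec one γ) * D (J (k' + 1) γ β) = 0 := by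
        have h0 : ∑ γ, (g γ * (Pc ^ m).mulVec one γ) * J (k' + 1) γ β = 0 :=
          IB (k' + 1) (by omega) (by omega) β
        have h1 : D (∑ γ, (g γ * (Pc ^ m).mulVec one γ) * J (k' + 1) γ β) = 0 := by
          rw [h0]; exact map_zero D
        rw [map_sum] at h1
        rw [← h1]
        refine Finset.sum_congr rfl fun γ _ => ?_
        rw [Derivation.leibniz, hDw γ]
        simp [smul_eq_mul]
      have hT2 : ∑ γ, (g γ * (Pc ^ m).mulVec one γ) * (∑ δ, J k' γ δ * Pc δ β)
          = ∑ δ, (∑ γ, (g γ * (Pc ^ m).mulVec one γ) * J k' γ δ) * Pc δ β := by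
        calc ∑ γ, (g γ * (Pc ^ m).mulVec one γ) * (∑ δ, J k' γ δ * Pc δ β)
            = ∑ γ, ∑ δ, ((g γ * (Pc ^ m).mulVec one γ) * J k' γ δ) * Pc δ β := by
              refine Finset.sum_congr rfl fun γ _ => ?_
              rw [Finset.mul_sum]
              exact Finset.sum_congr rfl fun δ _ => by ring
          _ = ∑ δ, ∑ γ, ((g γ * (Pc ^ m).mulVec one γ) * J k' γ δ) * Pc δ β :=
              Finset.sum_comm
          _ = ∑ δ, (∑ γ, (g γ * (Pc ^ m).mulVec one γ) * J k' γ δ) * Pc δ β := by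
              refine Finset.sum_congr rfl fun δ _ => ?_
              rw [Finset.sum_mul]
      have hT3 : ∑ γ, (g γ * (Pc ^ m).mulVec one γ) * (∑ δ, Mp γ δ * J k' δ β)
          = ∑ δ, (g δ * (Mp ^ (m + 1)).mulVec one δ) * J k' δ β := by
        calc ∑ γ, (g γ * (Pc ^ m).mulVec one γ) * (∑ δ, Mp γ δ * J k' δ β)
            = ∑ γ, ∑ δ, ((g γ * (Pc ^ m).mulVec one γ) * Mp γ δ) * J k' δ β := by
              refine Finset.sum_congr rfl fun γ _ => ?_
              rw [Finset.mul_sum]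
              exact Finset.sum_congr rfl fun δ _ => by ring
          _ = ∑ δ, ∑ γ, ((g γ * (Pc ^ m).mulVec one γ) * Mp γ δ) * J k' δ β :=
              Finset.sum_comm
          _ = ∑ δ, (∑ γ, (g γ * (Pc ^ m).mulVec one γ) * Mp γ δ) * J k' δ β := by
              refine Finset.sum_congr rfl fun δ _ => ?_
              rw [Finset.sum_mul]
          _ = ∑ δ, (g δ * (Mp ^ (m + 1)).mulVec one δ) * J k' δ β := by
              refine Finset.sum_congr rfl fun δ _ => ?_
              rw [hsa Mp hMpSA _ δ, hMv δ]
      rw [hT1, hT2, hT3, zero_add] at hE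
      exact hE
    have hA : (Mp ^ (m + 1)).mulVec one = (Pc ^ (m + 1)).mulVec one := by
      funext β
      have h := R 0 (by omega) β
      have hL : ∀ δ, ∑ γ, (g γ * (Pc ^ m).mulVec one γ) * J 0 γ δ
          = g δ * (Pc ^ m).mulVec one δ := by
        intro δ
        rw [hJ0]
        simp [Matrix.one_apply]
      have hR : ∑ δ, (g δ * (Mp ^ (m + 1)).mulVec one δ) * J 0 δ β
          = g β * (Mp ^ (m + 1)).mulVec one β := by
        rw [hJ0]
        simp [Matrix.one_apply]
      have hPv : (Pc ^ (m + 1)).mulVec one β = ∑ δ, Pc β δ * (Pc ^ m).mulVec one δ := by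
        have h1 : (Pc ^ (m + 1)).mulVec one = Pc.mulVec ((Pc ^ m).mulVec one) := by
          rw [Matrix.mulVec_mulVec, ← pow_succ']
        rw [h1]
        simp [Matrix.mulVec, dotProduct]
      have hLL : ∑ δ, (∑ γ, (g γ * (Pc ^ m).mulVec one γ) * J 0 γ δ) * Pc δ β
          = g β * (Pc ^ (m + 1)).mulVec one β := by
        calc ∑ δ, (∑ γ, (g γ * (Pc ^ m).mulVec one γ) * J 0 γ δ) * Pc δ β
            = ∑ δ, (g δ * (Pc ^ m).mulVec one δ) * Pc δ β := by
              exact Finset.sum_congr rfl fun δ _ => by rw [hL δ]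
          _ = g β * ∑ δ, Pc β δ * (Pc ^ m).mulVec one δ := hsa Pc hPcSA _ β
          _ = g β * (Pc ^ (m + 1)).mulVec one β := by rw [← hPv]
      rw [hLL, hR] at h
      exact ((hg β).mul_left_cancel h).symm
    refine ⟨hA, ?_⟩
    intro k' hk1 hkl β
    have h := R k' (by omega) β
    have hz : ∑ δ, (g δ * (Mp ^ (m + 1)).mulVec one δ) * J k' δ β = 0 := by
      rw [← h]
      refine Finset.sum_eq_zero fun δ _ => ?_
      rw [IB k' hk1 (by omega) δ, zero_mul]
    rw [hA] at hz
    exact hz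
end
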